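/- For positive integers m, a, n with m + a ≤ n: ∑_{i=1}^m ((n−i)!/(m+a−i)!)·H_{m+a−i} = (1/(n−m−a+1))·( (n!/(a+m−1)!)·(H_{a+m−1} − 1/(n−m−a+1)) − ((n−m)!/(a−1)!)·(H_{a−1} − 1/(n−m−a+1)) ), where H_k = ∑_{j=1}^k 1/j. -/

import Mathlib

/-! With `c = n - m - a` and `k = m + a - i`, the summand is `(c + k)! / k! * H k`, which is the
forward difference at `k - 1` of `harmonicAntidiff c`; the sum telescopes to the difference of its
values at `a + m - 1` and `a - 1`. -/

open Finset

noncomputable def H (n : ℕ) : ℝ := ∑ k ∈ Finset.range n, 1 / ((k : ℝ) + 1)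
noncomputable def H2 (n : ℕ) : ℝ := ∑ k ∈ Finset.range n, 1 / ((k : ℝ) + 1) ^ 2

theorem H_succ (k : ℕ) : H (k + 1) = H k + 1 / ((k : ℝ) + 1) :=
  sum_range_succ _ _

noncomputable def harmonicAntidiff (c k : ℕ) : ℝ :=
  (c + k + 1).factorial / k.factorial * (H k - 1 / ((c : ℝ) + 1)) / ((c : ℝ) + 1)

theorem harmonicAntidiff_succ_sub (c k : ℕ) :
    harmonicAntidiff c (k + 1) - harmonicAntidiff c k
      = (c + (k + 1)).factorial / (k + 1).factorial * H (k + 1) := by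
  have hfac : ((c + (k + 1) + 1).factorial : ℝ) = ((c : ℝ) + k + 2) * (c + k + 1).factorial := by
    rw [← add_assoc, Nat.factorial_succ]; push_cast; ring
  have hfac' : ((k + 1).factorial : ℝ) = ((k : ℝ) + 1) * k.factorial := by
    rw [Nat.factorial_succ]; push_cast; ring
  rw [harmonicAntidiff, harmonicAntidiff, H_succ, hfac, hfac', ← add_assoc]
  have hk : (k.factorial : ℝ) ≠ 0 := by positivity
  field_simp
  ring

theorem sum_Icc_one_eq_sum_range_sub {M : Type*} [AddCommMonoid M] (f : ℕ → M) (m : ℕ) :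
    ∑ i ∈ Icc 1 m, f i = ∑ j ∈ range m, f (m - j) := by
  refine sum_nbij' (m - ·) (m - ·) ?_ ?_ ?_ ?_
    fun i hi => by rw [Nat.sub_sub_self (mem_Icc.mp hi).2]
  all_goals intro i hi; simp only [mem_Icc, mem_range] at hi ⊢; omega

theorem sum_range_factorial_div_mul_H (c b m : ℕ) :
    ∑ j ∈ range m, ((c + (b + j + 1)).factorial : ℝ) / (b + j + 1).factorial * H (b + j + 1)
      = harmonicAntidiff c (b + m) - harmonicAntidiff c b := by
  simp only [← harmonicAntidiff_succ_sub]
  exact sum_range_sub (fun j => harmonicAntidiff c (b + j)) m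

theorem stmt11_general (m a n : ℕ) (ha : 0 < a)
    (h : m + a ≤ n) :
    ∑ i ∈ Finset.Icc 1 m, (((Nat.factorial (n - i)) : ℝ) / ((Nat.factorial (m + a - i)) : ℝ)) * H (m + a - i)
      = (1 / ((n - m - a + 1 : ℕ) : ℝ))
        * ((((Nat.factorial n) : ℝ) / ((Nat.factorial (a + m - 1)) : ℝ))
              * (H (a + m - 1) - 1 / ((n - m - a + 1 : ℕ) : ℝ))
            - (((Nat.factorial (n - m)) : ℝ) / ((Nat.factorial (a - 1)) : ℝ))
              * (H (a - 1) - 1 / ((n - m - a + 1 : ℕ) : ℝ))) := by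
  obtain ⟨b, rfl⟩ : ∃ b, a = b + 1 := ⟨a - 1, by omega⟩
  obtain ⟨c, rfl⟩ : ∃ c, n = c + m + (b + 1) := ⟨n - m - (b + 1), by omega⟩
  have hsum : ∑ i ∈ Icc 1 m, ((c + m + (b + 1) - i).factorial : ℝ) / (m + (b + 1) - i).factorial
        * H (m + (b + 1) - i)
      = ∑ j ∈ range m, ((c + (b + j + 1)).factorial : ℝ) / (b + j + 1).factorial * H (b + j + 1) := by
    rw [sum_Icc_one_eq_sum_range_sub]
    refine sum_congr rfl fun j hj => ?_
    have hj : j < m := mem_range.mp hj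
    rw [show m + (b + 1) - (m - j) = b + j + 1 by omega,
      show c + m + (b + 1) - (m - j) = c + (b + j + 1) by omega]
  rw [hsum, sum_range_factorial_div_mul_H, harmonicAntidiff, harmonicAntidiff,
    show c + m + (b + 1) - m - (b + 1) = c by omega, show b + 1 + m - 1 = b + m by omega,
    show c + (b + m) + 1 = c + m + (b + 1) by omega, show c + b + 1 = c + m + (b + 1) - m by omega,
    add_tsub_cancel_right]
  push_cast
  ring

theorem stmt11 (m a n : ℕ) (hm : 0 < m) (ha : 0 < a) (hn : 0 < n)
    (h : m + a ≤ n) :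
    ∑ i ∈ Finset.Icc 1 m, (((Nat.factorial (n - i)) : ℝ) / ((Nat.factorial (m + a - i)) : ℝ)) * H (m + a - i)
      = (1 / ((n - m - a + 1 : ℕ) : ℝ))
        * ((((Nat.factorial n) : ℝ) / ((Nat.factorial (a + m - 1)) : ℝ))
              * (H (a + m - 1) - 1 / ((n - m - a + 1 : ℕ) : ℝ))
            - (((Nat.factorial (n - m)) : ℝ) / ((Nat.factorial (a - 1)) : ℝ))
              * (H (a - 1) - 1 / ((n - m - a + 1 : ℕ) : ℝ))) :=
  stmt11_general m a n ha h
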